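/- arXiv:2108.08436 — 7 statements merged into one kernel-verified Lean document; each statement's English description precedes it below -/
import Mathlib

section
/- Let q be a positive integer and let φ : [0,∞) → ℝ^q be continuous and bounded. Then the following are equivalent: (i) there exist C_c > 0 and t_c > 0 such that ∫₀^{t_c} φ(s)φ(s)ᵀ ds − C_c·I_q is positive semidefinite (interval excitation); (ii) there exist times t₁, …, t_q > 0 such that the vectors φ(t₁), …, φ(t_q) are linearly independent (identifiability of the linear regression equation y(t) = φ(t)ᵀθ). (Continuous-time version of Proposition 1.) -/
/-!
For `T > 0`, `v ⬝ᵥ (∫₀ᵀ φ φᵀ) v = ∫₀ᵀ (v ⬝ᵥ φ s)²`, which by continuity of `φ` is positive exactly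
when `v ⬝ᵥ φ` does not vanish identically on `(0, T]`. So the Gram integral is positive definite iff
`φ '' (0, T]` has trivial orthogonal complement, i.e. spans `ℝ^q`, i.e. contains `q` linearly
independent vectors `φ tᵢ`. A positive definite matrix dominates `C • 1` for `C` its least
eigenvalue, and conversely; a bound `T` for finitely many `tᵢ` always exists.
-/

open Matrix
open Set Submodule Module MeasureTheory

theorem span_eq_top_iff_forall_dotProduct_eq_zero {K n : Type*} [Field K] [Fintype n]
    [DecidableEq n] {S : Set (n → K)} :
    span K S = ⊤ ↔ ∀ v : n → K, (∀ x ∈ S, v ⬝ᵥ x = 0) → v = 0 := by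
  rw [← dualAnnihilator_eq_bot_iff, Submodule.eq_bot_iff,
    ← (dotProductEquiv K n).toEquiv.forall_congr_right]
  simp only [LinearEquiv.coe_toEquiv, ← SetLike.mem_coe, coe_dualAnnihilator_span, subset_def,
    mem_ofPred_eq, EmbeddingLike.map_eq_zero_iff]
  rfl

theorem span_image_eq_top_iff_exists_linearIndependent {K V α : Type*} [DivisionRing K]
    [AddCommGroup V] [Module K V] [FiniteDimensional K V] {n : ℕ} (hn : finrank K V = n)
    {f : α → V} {s : Set α} :
    span K (f '' s) = ⊤ ↔ ∃ t : Fin n → α, (∀ i, t i ∈ s) ∧ LinearIndependent K (f ∘ t) := by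
  refine ⟨fun hs => ?_, fun ⟨t, hts, hli⟩ => ?_⟩
  · let b := (Basis.ofSpan hs.ge).reindex
      ((Basis.ofSpan hs.ge).indexEquiv (finBasisOfFinrankEq K V hn))
    have hb : ∀ i, b i ∈ f '' s := fun i => Basis.ofSpan_subset hs.ge (by simp [b])
    choose t hts hft using hb
    exact ⟨t, hts, (funext hft : f ∘ t = b) ▸ b.linearIndependent⟩
  · refine eq_top_mono (span_mono ?_) (hli.span_eq_top_of_card_eq_finrank' (by simp [hn]))
    rintro _ ⟨i, rfl⟩
    exact mem_image_of_mem f (hts i)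

open scoped ComplexOrder MatrixOrder in
theorem Matrix.posDef_iff_exists_posSemidef_sub_smul_one {n 𝕜 : Type*} [Fintype n] [DecidableEq n]
    [RCLike 𝕜] {A : Matrix n n 𝕜} :
    A.PosDef ↔ ∃ C > (0 : ℝ), (A - C • (1 : Matrix n n 𝕜)).PosSemidef := by
  refine ⟨fun hA => ?_, fun ⟨C, hC, hAC⟩ => ?_⟩
  · rcases isEmpty_or_nonempty n with _ | _
    · exact ⟨1, one_pos, Subsingleton.elim (0 : Matrix n n 𝕜) (A - (1 : ℝ) • 1) ▸ PosSemidef.zero⟩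
    obtain ⟨C, hC, hCA⟩ := (CFC.exists_pos_algebraMap_le_iff hA.isHermitian).2
      fun x hx => hA.isStrictlyPositive.spectrum_pos hx
    exact ⟨C, hC, by rwa [Algebra.algebraMap_eq_smul_one] at hCA⟩
  · simpa using PosDef.posSemidef_add hAC (PosDef.one.smul hC)

theorem intervalIntegral.integral_sq_pos_iff {f : ℝ → ℝ} {a b : ℝ} (hab : a < b)
    (hf : ContinuousOn f (Icc a b)) :
    0 < ∫ x in a..b, f x ^ 2 ↔ ∃ x ∈ Ioc a b, f x ≠ 0 := by
  refine ⟨fun hpos => ?_, fun ⟨c, hc, hfc⟩ => ?_⟩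
  · by_contra! hzero
    refine hpos.ne' ?_
    rw [integral_of_le hab.le, setIntegral_congr_fun (g := fun _ => 0) measurableSet_Ioc
      (fun x hx => by simp [hzero x hx]), MeasureTheory.integral_zero]
  · exact integral_pos hab (hf.pow 2) (fun x _ => sq_nonneg _)
      ⟨c, Ioc_subset_Icc_self hc, by positivity⟩

section IntervalGram

variable {ι : Type*}

noncomputable def intervalGram (φ : ℝ → ι → ℝ) (a b : ℝ) : Matrix ι ι ℝ :=
  of fun i j => ∫ s in a..b, φ s i * φ s j

theorem intervalGram_isHermitian (φ : ℝ → ι → ℝ) (a b : ℝ) : (intervalGram φ a b).IsHermitian :=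
  ext fun i j => by simp [intervalGram, mul_comm]

theorem dotProduct_intervalGram_mulVec [Fintype ι] {φ : ℝ → ι → ℝ} {a b : ℝ}
    (hφ : ContinuousOn φ (uIcc a b)) (v : ι → ℝ) :
    v ⬝ᵥ (intervalGram φ a b *ᵥ v) = ∫ s in a..b, (v ⬝ᵥ φ s) ^ 2 := by
  have hint {f : ℝ → ℝ} (hf : ContinuousOn f (uIcc a b)) : IntervalIntegrable f volume a b :=
    hf.intervalIntegrable
  symm
  calc ∫ s in a..b, (v ⬝ᵥ φ s) ^ 2
      = ∫ s in a..b, ∑ i, ∑ j, v i * v j * (φ s i * φ s j) := by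
        simp only [sq, dotProduct, Finset.sum_mul_sum]
        congr! 4 with s i - j -
        ring
    _ = ∑ i, ∑ j, v i * v j * ∫ s in a..b, φ s i * φ s j := by
        rw [intervalIntegral.integral_finsetSum fun i _ => hint (by fun_prop)]
        congr! 1 with i -
        rw [intervalIntegral.integral_finsetSum fun j _ => hint (by fun_prop)]
        simp only [intervalIntegral.integral_const_mul]
    _ = v ⬝ᵥ (intervalGram φ a b *ᵥ v) := by
        simp only [dotProduct, mulVec, intervalGram, of_apply, Finset.mul_sum]
        congr! 2 with i - j -
        ring

theorem intervalGram_posDef_iff_span_eq_top [Fintype ι] [DecidableEq ι] {φ : ℝ → ι → ℝ}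
    {a b : ℝ} (hab : a < b) (hφ : ContinuousOn φ (Icc a b)) :
    (intervalGram φ a b).PosDef ↔ span ℝ (φ '' Ioc a b) = ⊤ := by
  rw [posDef_iff_dotProduct_mulVec, span_eq_top_iff_forall_dotProduct_eq_zero]
  refine (and_iff_right (intervalGram_isHermitian φ a b)).trans (forall_congr' fun v => ?_)
  rw [star_trivial, dotProduct_intervalGram_mulVec (uIcc_of_le hab.le ▸ hφ),
    intervalIntegral.integral_sq_pos_iff hab (by fun_prop)]
  simp only [forall_mem_image, ← not_imp_not (a := v = 0)]
  push Not
  rfl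

end IntervalGram

theorem ie_iff_identifiable_continuous_general (q : ℕ) (φ : ℝ → Fin q → ℝ)
    (hcont : ContinuousOn φ (Set.Ici 0)) :
    (∃ C_c : ℝ, 0 < C_c ∧ ∃ t_c : ℝ, 0 < t_c ∧
      (Matrix.of (fun i j => ∫ s in (0 : ℝ)..t_c, φ s i * φ s j)
        - C_c • (1 : Matrix (Fin q) (Fin q) ℝ)).PosSemidef) ↔
    (∃ t : Fin q → ℝ, (∀ i, 0 < t i) ∧ LinearIndependent ℝ (fun i => φ (t i))) := by
  have hexcited_iff {T : ℝ} (hT : 0 < T) :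
      (∃ C > (0 : ℝ), (intervalGram φ 0 T - C • 1).PosSemidef) ↔
        ∃ t : Fin q → ℝ, (∀ i, t i ∈ Ioc 0 T) ∧ LinearIndependent ℝ (φ ∘ t) := by
    rw [← posDef_iff_exists_posSemidef_sub_smul_one,
      intervalGram_posDef_iff_span_eq_top hT (hcont.mono Icc_subset_Ici_self),
      span_image_eq_top_iff_exists_linearIndependent (finrank_fin_fun ℝ)]
  constructor
  · rintro ⟨C, hC, T, hT, hCT⟩
    obtain ⟨t, ht, hli⟩ := (hexcited_iff hT).1 ⟨C, hC, hCT⟩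
    exact ⟨t, fun i => (ht i).1, hli⟩
  · rintro ⟨t, ht, hli⟩
    obtain ⟨T, hT⟩ := (Set.finite_range t).bddAbove
    have htT : ∀ i, t i ∈ Ioc 0 (max T 1) :=
      fun i => ⟨ht i, le_max_of_le_left (hT (mem_range_self i))⟩
    obtain ⟨C, hC, hCT⟩ := (hexcited_iff (lt_max_of_lt_right one_pos)).2 ⟨t, htT, hli⟩
    exact ⟨C, hC, max T 1, lt_max_of_lt_right one_pos, hCT⟩

/-- Continuous-time version of Proposition 1: interval excitation of a continuous
bounded regressor `φ` is equivalent to identifiability of the linear regression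
equation. -/
theorem ie_iff_identifiable_continuous (q : ℕ) (hq : 0 < q) (φ : ℝ → Fin q → ℝ)
    (hcont : ContinuousOn φ (Set.Ici 0))
    (hbdd : ∃ B : ℝ, ∀ t ≥ (0 : ℝ), Real.sqrt (φ t ⬝ᵥ φ t) ≤ B) :
    (∃ C_c : ℝ, 0 < C_c ∧ ∃ t_c : ℝ, 0 < t_c ∧
      (Matrix.of (fun i j => ∫ s in (0 : ℝ)..t_c, φ s i * φ s j)
        - C_c • (1 : Matrix (Fin q) (Fin q) ℝ)).PosSemidef) ↔
    (∃ t : Fin q → ℝ, (∀ i, 0 < t i) ∧ LinearIndependent ℝ (fun i => φ (t i))) :=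
  ie_iff_identifiable_continuous_general q φ hcont
end

section
/- (Discrete-time G+D interlaced estimator, Proposition 2.) Let q be a positive integer, θ ∈ ℝ^q, φ : ℕ → ℝ^q a bounded sequence, y(k) = φ(k)ᵀθ, γ > 0 a constant and γ_g : ℕ → ℝ with γ_g(k) > 0 for all k. Define A(k) := I_q − φ(k)φ(k)ᵀ/(γ_g(k) + |φ(k)|²) and the recursions θ̂_g(k+1) = θ̂_g(k) + φ(k)(y(k) − φ(k)ᵀθ̂_g(k))/(γ_g(k) + |φ(k)|²) with θ̂_g(0) = θ_{g0} ∈ ℝ^q; Φ(k+1) = A(k)Φ(k) with Φ(0) = I_q; 𝒟(k) := I_q − Φ(k); Δ(k) := det 𝒟(k); Y(k) := adj(𝒟(k))·(θ̂_g(k) − Φ(k)θ_{g0}); and θ̂(k+1) = θ̂(k) + Δ(k)(Y(k) − Δ(k)θ̂(k))/(γ + Δ(k)²) with θ̂(0) = θ₀ ∈ ℝ^q. If φ is interval excited, then θ̂(k) converges to θ exponentially fast, i.e., there exist M ≥ 0 and λ ∈ (0,1) such that |θ̂(k) − θ| ≤ M·λ^k for all k ∈ ℕ. -/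
/-!
The gradient estimator's error is `θ̂_g(k) - θ = Φ(k)(θ_g0 - θ)`, so
`θ̂_g(k) - Φ(k)θ_g0 = 𝒟(k)θ` and the adjugate turns it into the scalar regression
`Y(k) = Δ(k)θ`; on it the second estimator multiplies its error by `γ / (γ + Δ(k)²) ≤ 1`.

Every `A(k)` is a contraction removing at least the energy `(φ(k)ᵀw)² / (γ_g(k) + |φ(k)|²)`
from `w`. Over the excitation window `j < K = k_d + 1`, `φ(j)ᵀx` differs from `φ(j)ᵀΦ(j)x` by a
drift that is itself controlled by the energy removed so far, so interval excitation forces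
`|Φ(K)x| ≤ ρ|x|` with `ρ < 1`, and then `|Φ(k)x| ≤ ρ|x|` for all `k ≥ K`. Hence
`|𝒟(k)x| ≥ (1 - ρ)|x|`, so `Δ(k)² ≥ (1 - ρ)^(2q)` and the error factor is at most
`γ / (γ + (1 - ρ)^(2q)) < 1` from time `K` on.
-/

open Matrix Finset

section Euclidean

variable {n : Type*} [Fintype n]

lemma inner_toLp_toLp (u v : n → ℝ) :
    inner ℝ (WithLp.toLp 2 u) (WithLp.toLp 2 v) = u ⬝ᵥ v := by
  simp [EuclideanSpace.inner_eq_star_dotProduct, dotProduct_comm]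

lemma dotProduct_self_eq_norm_sq (v : n → ℝ) : v ⬝ᵥ v = ‖WithLp.toLp 2 v‖ ^ 2 := by
  rw [← real_inner_self_eq_norm_sq, inner_toLp_toLp]

lemma dotProduct_self_nonneg (v : n → ℝ) : 0 ≤ v ⬝ᵥ v := by
  rw [dotProduct_self_eq_norm_sq]; positivity

lemma dotProduct_self_sub_smul (w φ : n → ℝ) (r : ℝ) :
    (w - r • φ) ⬝ᵥ (w - r • φ) = w ⬝ᵥ w - 2 * r * (φ ⬝ᵥ w) + r ^ 2 * (φ ⬝ᵥ φ) := by
  simp only [sub_dotProduct, dotProduct_sub, smul_dotProduct, dotProduct_smul, smul_eq_mul,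
    dotProduct_comm φ w]
  ring

lemma sqrt_dotProduct_self (v : n → ℝ) : √(v ⬝ᵥ v) = ‖WithLp.toLp 2 v‖ := by
  rw [dotProduct_self_eq_norm_sq, Real.sqrt_sq (norm_nonneg _)]

lemma sq_dotProduct_le (u v : n → ℝ) : (u ⬝ᵥ v) ^ 2 ≤ (u ⬝ᵥ u) * (v ⬝ᵥ v) := by
  simpa only [inner_toLp_toLp, sq] using
    real_inner_mul_inner_self_le (WithLp.toLp 2 u) (WithLp.toLp 2 v)

lemma dotProduct_self_sum_le {ι : Type*} (s : Finset ι) (w : ι → n → ℝ) :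
    (∑ i ∈ s, w i) ⬝ᵥ (∑ i ∈ s, w i) ≤ #s * ∑ i ∈ s, w i ⬝ᵥ w i := by
  simp only [dotProduct_self_eq_norm_sq, WithLp.toLp_sum]
  calc ‖∑ i ∈ s, WithLp.toLp 2 (w i)‖ ^ 2 ≤ (∑ i ∈ s, ‖WithLp.toLp 2 (w i)‖) ^ 2 :=
        pow_le_pow_left₀ (norm_nonneg _) (norm_sum_le _ _) 2
    _ ≤ #s * ∑ i ∈ s, ‖WithLp.toLp 2 (w i)‖ ^ 2 := sq_sum_le_card_mul_sum_sq

lemma sq_one_sub_mul_le_dotProduct_self_sub {u w : n → ℝ} {ρ : ℝ} (hρ0 : 0 ≤ ρ) (hρ1 : ρ ≤ 1)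
    (h : w ⬝ᵥ w ≤ ρ ^ 2 * (u ⬝ᵥ u)) : (1 - ρ) ^ 2 * (u ⬝ᵥ u) ≤ (u - w) ⬝ᵥ (u - w) := by
  rw [dotProduct_self_eq_norm_sq, dotProduct_self_eq_norm_sq, ← mul_pow] at h ⊢
  have hw : ‖WithLp.toLp 2 w‖ ≤ ρ * ‖WithLp.toLp 2 u‖ :=
    (pow_le_pow_iff_left₀ (norm_nonneg _) (by positivity) two_ne_zero).mp h
  rw [WithLp.toLp_sub]
  exact pow_le_pow_left₀ (mul_nonneg (by linarith) (norm_nonneg _))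
    (by linarith [norm_sub_norm_le (WithLp.toLp 2 u) (WithLp.toLp 2 w)]) 2

lemma pow_card_le_sq_det [DecidableEq n] {D : Matrix n n ℝ} {c : ℝ} (hc : 0 ≤ c)
    (h : ∀ x, c * (x ⬝ᵥ x) ≤ D *ᵥ x ⬝ᵥ D *ᵥ x) : c ^ Fintype.card n ≤ D.det ^ 2 := by
  have hM : (Dᴴ * D).IsHermitian := isHermitian_conjTranspose_mul_self D
  have heig : ∀ i, c ≤ hM.eigenvalues i := by
    intro i
    set v := (hM.eigenvectorBasis i).ofLp
    have hv : v ⬝ᵥ v = 1 := by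
      rw [dotProduct_self_eq_norm_sq]
      simp [v]
    have hDv : D *ᵥ v ⬝ᵥ D *ᵥ v = hM.eigenvalues i := by
      rw [dotProduct_mulVec, ← mulVec_transpose, mulVec_mulVec,
        ← conjTranspose_eq_transpose_of_trivial, hM.mulVec_eigenvectorBasis, smul_dotProduct, hv,
        smul_eq_mul, mul_one]
    simpa [hv, hDv] using h v
  calc c ^ Fintype.card n = ∏ _ : n, c := by simp
    _ ≤ ∏ i, hM.eigenvalues i := prod_le_prod (fun _ _ => hc) (fun i _ => heig i)
    _ = D.det ^ 2 := by
      have hdet := hM.det_eq_prod_eigenvalues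
      rw [det_mul, det_conjTranspose, star_trivial] at hdet
      simpa [sq] using hdet.symm

end Euclidean

section NormalizedGradient

variable {n : Type*} [Fintype n] [DecidableEq n]

noncomputable def normalizedGradientMatrix (g : ℝ) (φ : n → ℝ) : Matrix n n ℝ :=
  1 - (g + φ ⬝ᵥ φ)⁻¹ • vecMulVec φ φ

lemma normalizedGradientMatrix_mulVec (g : ℝ) (φ w : n → ℝ) :
    normalizedGradientMatrix g φ *ᵥ w = w - ((φ ⬝ᵥ w) / (g + φ ⬝ᵥ φ)) • φ := by
  ext i
  simp [normalizedGradientMatrix, sub_mulVec, smul_mulVec, vecMulVec_mulVec, div_eq_inv_mul,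
    mul_assoc]

lemma normalizedGradientMatrix_mulVec_sub (g : ℝ) (φ θ ϑ : n → ℝ) :
    ϑ + ((φ ⬝ᵥ θ - φ ⬝ᵥ ϑ) / (g + φ ⬝ᵥ φ)) • φ - θ
      = normalizedGradientMatrix g φ *ᵥ (ϑ - θ) := by
  rw [normalizedGradientMatrix_mulVec, dotProduct_sub, ← neg_sub (φ ⬝ᵥ θ), neg_div, neg_smul]
  abel

lemma dotProduct_self_normalizedGradientMatrix_mulVec_add_le {g : ℝ} (hg : 0 < g) (φ w : n → ℝ) :
    normalizedGradientMatrix g φ *ᵥ w ⬝ᵥ normalizedGradientMatrix g φ *ᵥ w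
      + (φ ⬝ᵥ w) ^ 2 / (g + φ ⬝ᵥ φ) ≤ w ⬝ᵥ w := by
  have hd : 0 < g + φ ⬝ᵥ φ := add_pos_of_pos_of_nonneg hg (dotProduct_self_nonneg φ)
  have key : - 2 * ((φ ⬝ᵥ w) / (g + φ ⬝ᵥ φ)) * (φ ⬝ᵥ w)
      + ((φ ⬝ᵥ w) / (g + φ ⬝ᵥ φ)) ^ 2 * (φ ⬝ᵥ φ) + (φ ⬝ᵥ w) ^ 2 / (g + φ ⬝ᵥ φ)
      = - ((φ ⬝ᵥ w) / (g + φ ⬝ᵥ φ)) ^ 2 * g := by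
    field_simp
    ring
  rw [normalizedGradientMatrix_mulVec, dotProduct_self_sub_smul]
  nlinarith [sq_nonneg ((φ ⬝ᵥ w) / (g + φ ⬝ᵥ φ))]

lemma dotProduct_self_normalizedGradientMatrix_mulVec_le {g : ℝ} (hg : 0 < g) (φ w : n → ℝ) :
    normalizedGradientMatrix g φ *ᵥ w ⬝ᵥ normalizedGradientMatrix g φ *ᵥ w ≤ w ⬝ᵥ w :=
  le_of_add_le_of_nonneg_left (dotProduct_self_normalizedGradientMatrix_mulVec_add_le hg φ w)
    (div_nonneg (sq_nonneg _) (add_pos_of_pos_of_nonneg hg (dotProduct_self_nonneg φ)).le)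

lemma dotProduct_self_normalizedGradientMatrix_mulVec_sub_le {g : ℝ} (hg : 0 < g) (φ w : n → ℝ) :
    (normalizedGradientMatrix g φ *ᵥ w - w) ⬝ᵥ (normalizedGradientMatrix g φ *ᵥ w - w)
      ≤ (φ ⬝ᵥ w) ^ 2 / (g + φ ⬝ᵥ φ) := by
  have hd : 0 < g + φ ⬝ᵥ φ := add_pos_of_pos_of_nonneg hg (dotProduct_self_nonneg φ)
  have key : (φ ⬝ᵥ w) ^ 2 / (g + φ ⬝ᵥ φ)
      = ((φ ⬝ᵥ w) / (g + φ ⬝ᵥ φ)) ^ 2 * (g + φ ⬝ᵥ φ) := by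
    field_simp
  rw [normalizedGradientMatrix_mulVec, sub_sub_cancel_left, neg_dotProduct, dotProduct_neg,
    neg_neg, smul_dotProduct, dotProduct_smul, smul_eq_mul, smul_eq_mul, key]
  nlinarith [sq_nonneg ((φ ⬝ᵥ w) / (g + φ ⬝ᵥ φ))]

end NormalizedGradient

section Excitation

variable {n : Type*} [Fintype n] [DecidableEq n] {φ : ℕ → n → ℝ} {g : ℕ → ℝ} {v : ℕ → n → ℝ}

lemma dotProduct_self_add_sum_le_of_normalizedGradient (hg : ∀ k, 0 < g k)
    (hv : ∀ k, v (k + 1) = normalizedGradientMatrix (g k) (φ k) *ᵥ v k) (m : ℕ) :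
    v m ⬝ᵥ v m + ∑ j ∈ range m, (φ j ⬝ᵥ v j) ^ 2 / (g j + φ j ⬝ᵥ φ j) ≤ v 0 ⬝ᵥ v 0 := by
  induction m with
  | zero => simp
  | succ m ih =>
    rw [sum_range_succ, hv m]
    linarith [dotProduct_self_normalizedGradientMatrix_mulVec_add_le (hg m) (φ m) (v m)]

lemma dotProduct_self_sub_le_of_normalizedGradient (hg : ∀ k, 0 < g k)
    (hv : ∀ k, v (k + 1) = normalizedGradientMatrix (g k) (φ k) *ᵥ v k) (m : ℕ) :
    (v 0 - v m) ⬝ᵥ (v 0 - v m) ≤ m * ∑ j ∈ range m, (φ j ⬝ᵥ v j) ^ 2 / (g j + φ j ⬝ᵥ φ j) := by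
  rw [← sum_range_sub' v m]
  refine (dotProduct_self_sum_le _ _).trans ?_
  rw [card_range]
  gcongr with j
  rw [hv j, ← neg_sub, neg_dotProduct, dotProduct_neg, neg_neg]
  exact dotProduct_self_normalizedGradientMatrix_mulVec_sub_le (hg j) _ _

lemma sum_sq_dotProduct_le_of_normalizedGradient (hg : ∀ k, 0 < g k)
    (hv : ∀ k, v (k + 1) = normalizedGradientMatrix (g k) (φ k) *ᵥ v k) (K : ℕ) :
    ∑ j ∈ range K, (φ j ⬝ᵥ v 0) ^ 2
      ≤ 2 * (K + 1) * (∑ j ∈ range K, (g j + φ j ⬝ᵥ φ j))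
        * ∑ j ∈ range K, (φ j ⬝ᵥ v j) ^ 2 / (g j + φ j ⬝ᵥ φ j) := by
  set t := fun j => (φ j ⬝ᵥ v j) ^ 2 / (g j + φ j ⬝ᵥ φ j)
  set S := ∑ j ∈ range K, t j
  have hd : ∀ j, 0 < g j + φ j ⬝ᵥ φ j :=
    fun j => add_pos_of_pos_of_nonneg (hg j) (dotProduct_self_nonneg _)
  have ht0 : ∀ j, 0 ≤ t j := fun j => div_nonneg (sq_nonneg _) (hd j).le
  have hS0 : 0 ≤ S := sum_nonneg fun j _ => ht0 j
  have hterm : ∀ j ∈ range K,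
      (φ j ⬝ᵥ v 0) ^ 2 ≤ 2 * (K + 1) * S * (g j + φ j ⬝ᵥ φ j) := by
    intro j hj
    have hjK : j ≤ K := (mem_range.mp hj).le
    have hsplit : φ j ⬝ᵥ v 0 = φ j ⬝ᵥ v j + φ j ⬝ᵥ (v 0 - v j) := by
      rw [dotProduct_sub]; ring
    have hdrift : (v 0 - v j) ⬝ᵥ (v 0 - v j) ≤ K * S :=
      (dotProduct_self_sub_le_of_normalizedGradient hg hv j).trans <|
        mul_le_mul (by exact_mod_cast hjK) (sum_le_sum_of_subset_of_nonneg
          (range_subset_range.mpr hjK) fun i _ _ => ht0 i) (sum_nonneg fun i _ => ht0 i)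
          (Nat.cast_nonneg K)
    have h1 : (φ j ⬝ᵥ v j) ^ 2 = t j * (g j + φ j ⬝ᵥ φ j) :=
      (div_mul_cancel₀ _ (hd j).ne').symm
    have h2 : (φ j ⬝ᵥ (v 0 - v j)) ^ 2 ≤ (φ j ⬝ᵥ φ j) * (K * S) :=
      (sq_dotProduct_le _ _).trans (mul_le_mul_of_nonneg_left hdrift (dotProduct_self_nonneg _))
    have h3 : t j * (g j + φ j ⬝ᵥ φ j) ≤ S * (g j + φ j ⬝ᵥ φ j) :=
      mul_le_mul_of_nonneg_right (single_le_sum (fun i _ => ht0 i) hj) (hd j).le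
    have h4 : (φ j ⬝ᵥ φ j) * (K * S) ≤ (g j + φ j ⬝ᵥ φ j) * (K * S) :=
      mul_le_mul_of_nonneg_right (by linarith [hg j]) (by positivity)
    rw [hsplit]
    nlinarith [sq_nonneg (φ j ⬝ᵥ v j - φ j ⬝ᵥ (v 0 - v j))]
  calc ∑ j ∈ range K, (φ j ⬝ᵥ v 0) ^ 2
      ≤ ∑ j ∈ range K, 2 * (K + 1) * S * (g j + φ j ⬝ᵥ φ j) := sum_le_sum hterm
    _ = 2 * (K + 1) * (∑ j ∈ range K, (g j + φ j ⬝ᵥ φ j)) * S := by rw [← mul_sum]; ring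

theorem mul_dotProduct_self_le_of_normalizedGradient (hg : ∀ k, 0 < g k) {C : ℝ} {K : ℕ}
    (hIE : ∀ x, C * (x ⬝ᵥ x) ≤ ∑ j ∈ range K, (φ j ⬝ᵥ x) ^ 2)
    (hv : ∀ k, v (k + 1) = normalizedGradientMatrix (g k) (φ k) *ᵥ v k) :
    C * (v 0 ⬝ᵥ v 0)
      ≤ 2 * (K + 1) * (∑ j ∈ range K, (g j + φ j ⬝ᵥ φ j)) * (v 0 ⬝ᵥ v 0 - v K ⬝ᵥ v K) := by
  have hG : 0 ≤ ∑ j ∈ range K, (g j + φ j ⬝ᵥ φ j) :=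
    sum_nonneg fun j _ => add_nonneg (hg j).le (dotProduct_self_nonneg _)
  refine (hIE _).trans <| (sum_sq_dotProduct_le_of_normalizedGradient hg hv K).trans ?_
  gcongr
  linarith [dotProduct_self_add_sum_le_of_normalizedGradient hg hv K]

variable {Φ : ℕ → Matrix n n ℝ}

theorem exists_dotProduct_self_mulVec_le_of_normalizedGradient (hg : ∀ k, 0 < g k) {C : ℝ}
    (hC : 0 < C) {K : ℕ} (hIE : ∀ x, C * (x ⬝ᵥ x) ≤ ∑ j ∈ range K, (φ j ⬝ᵥ x) ^ 2)
    (hΦ0 : Φ 0 = 1) (hΦ : ∀ k, Φ (k + 1) = normalizedGradientMatrix (g k) (φ k) * Φ k) :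
    ∃ ρ, 0 ≤ ρ ∧ ρ < 1 ∧ ∀ k, K ≤ k → ∀ x, Φ k *ᵥ x ⬝ᵥ Φ k *ᵥ x ≤ ρ ^ 2 * (x ⬝ᵥ x) := by
  set P := 2 * (K + 1) * ∑ j ∈ range K, (g j + φ j ⬝ᵥ φ j)
  have hP : 0 ≤ P := mul_nonneg (by positivity)
    (sum_nonneg fun j _ => add_nonneg (hg j).le (dotProduct_self_nonneg _))
  -- `ρ² = P / (C + P)` turns `C|x|² ≤ P(|x|² - |Φ(K)x|²)` into `|Φ(K)x|² ≤ ρ²|x|²`.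
  refine ⟨√(P / (C + P)), Real.sqrt_nonneg _, ?_, fun k hk x => ?_⟩
  · rw [Real.sqrt_lt' one_pos, one_pow, div_lt_one (by positivity)]
    linarith
  rw [Real.sq_sqrt (by positivity)]
  induction k, hk using Nat.le_induction with
  | base =>
    have hv : ∀ k, Φ (k + 1) *ᵥ x = normalizedGradientMatrix (g k) (φ k) *ᵥ (Φ k *ᵥ x) :=
      fun k => by rw [hΦ k, mulVec_mulVec]
    have hdiss := mul_dotProduct_self_le_of_normalizedGradient (v := (Φ · *ᵥ x)) hg hIE hv
    have hmono := dotProduct_self_add_sum_le_of_normalizedGradient (v := (Φ · *ᵥ x)) hg hv K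
    have hsum : 0 ≤ ∑ j ∈ range K, (φ j ⬝ᵥ Φ j *ᵥ x) ^ 2 / (g j + φ j ⬝ᵥ φ j) :=
      sum_nonneg fun j _ => div_nonneg (sq_nonneg _)
        (add_nonneg (hg j).le (dotProduct_self_nonneg _))
    rw [hΦ0, one_mulVec] at hdiss hmono
    rw [div_mul_eq_mul_div, le_div_iff₀ (by positivity)]
    nlinarith
  | succ k _ ih =>
    rw [hΦ k, ← mulVec_mulVec]
    exact (dotProduct_self_normalizedGradientMatrix_mulVec_le (hg k) _ _).trans ih

theorem exists_pos_le_sq_det_one_sub_of_normalizedGradient (hg : ∀ k, 0 < g k) {C : ℝ}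
    (hC : 0 < C) {K : ℕ} (hIE : ∀ x, C * (x ⬝ᵥ x) ≤ ∑ j ∈ range K, (φ j ⬝ᵥ x) ^ 2)
    (hΦ0 : Φ 0 = 1) (hΦ : ∀ k, Φ (k + 1) = normalizedGradientMatrix (g k) (φ k) * Φ k) :
    ∃ δ, 0 < δ ∧ ∀ k, K ≤ k → δ ≤ (1 - Φ k).det ^ 2 := by
  obtain ⟨ρ, hρ0, hρ1, hΦρ⟩ :=
    exists_dotProduct_self_mulVec_le_of_normalizedGradient hg hC hIE hΦ0 hΦ
  refine ⟨((1 - ρ) ^ 2) ^ Fintype.card n, pow_pos (pow_pos (sub_pos.2 hρ1) 2) _,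
    fun k hk => pow_card_le_sq_det (sq_nonneg _) fun x => ?_⟩
  rw [sub_mulVec, one_mulVec]
  exact sq_one_sub_mul_le_dotProduct_self_sub hρ0 hρ1.le (hΦρ k hk x)

end Excitation

lemma mul_dotProduct_self_le_sum_sq_of_posSemidef {n ι : Type*} [Fintype n] [DecidableEq n]
    {s : Finset ι} {φ : ι → n → ℝ} {C : ℝ}
    (h : (∑ j ∈ s, vecMulVec (φ j) (φ j) - C • (1 : Matrix n n ℝ)).PosSemidef) (x : n → ℝ) :
    C * (x ⬝ᵥ x) ≤ ∑ j ∈ s, (φ j ⬝ᵥ x) ^ 2 := by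
  have h0 := h.dotProduct_mulVec_nonneg x
  have hquad : ∀ j, x ⬝ᵥ vecMulVec (φ j) (φ j) *ᵥ x = (φ j ⬝ᵥ x) ^ 2 := fun j => by
    rw [vecMulVec_mulVec, op_smul_eq_smul, dotProduct_smul, smul_eq_mul, dotProduct_comm, sq]
  simp only [star_trivial, sub_mulVec, sum_mulVec, smul_mulVec, one_mulVec, dotProduct_sub,
    dotProduct_sum, hquad, dotProduct_smul, smul_eq_mul] at h0
  linarith

lemma mulVec_eq_of_transition {n α : Type*} [Fintype n] [DecidableEq n] [Semiring α]
    {A Φ : ℕ → Matrix n n α} (hΦ0 : Φ 0 = 1) (hΦ : ∀ k, Φ (k + 1) = A k * Φ k)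
    {e : ℕ → n → α} (he : ∀ k, e (k + 1) = A k *ᵥ e k) (k : ℕ) : e k = Φ k *ᵥ e 0 := by
  induction k with
  | zero => rw [hΦ0, one_mulVec]
  | succ k ih => rw [he, ih, hΦ, mulVec_mulVec]

lemma norm_le_div_pow_mul_pow_of_smul {E : Type*} [SeminormedAddCommGroup E] [NormedSpace ℝ E]
    {e : ℕ → E} {c : ℕ → ℝ} {K : ℕ} {lam : ℝ} (hlam0 : 0 < lam) (hlam1 : lam ≤ 1)
    (hc0 : ∀ k, 0 ≤ c k) (hc1 : ∀ k, c k ≤ 1) (hcK : ∀ k, K ≤ k → c k ≤ lam)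
    (he : ∀ k, e (k + 1) = c k • e k) (k : ℕ) : ‖e k‖ ≤ ‖e 0‖ / lam ^ K * lam ^ k := by
  have hstep : ∀ k, ‖e (k + 1)‖ = c k * ‖e k‖ := fun k => by
    rw [he, norm_smul, Real.norm_of_nonneg (hc0 k)]
  have hanti : Antitone (‖e ·‖) := antitone_nat_of_succ_le fun k => by
    rw [hstep]; exact mul_le_of_le_one_left (norm_nonneg _) (hc1 k)
  rw [div_mul_eq_mul_div, le_div_iff₀ (pow_pos hlam0 K)]
  rcases le_total k K with hk | hk
  · exact mul_le_mul (hanti (Nat.zero_le k)) (pow_le_pow_of_le_one hlam0.le hlam1 hk)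
      (by positivity) (norm_nonneg _)
  induction k, hk using Nat.le_induction with
  | base => exact mul_le_mul_of_nonneg_right (hanti (Nat.zero_le K)) (by positivity)
  | succ k hk ih =>
    calc ‖e (k + 1)‖ * lam ^ K = c k * (‖e k‖ * lam ^ K) := by rw [hstep, mul_assoc]
      _ ≤ lam * (‖e 0‖ * lam ^ k) := mul_le_mul (hcK k hk) ih (by positivity) hlam0.le
      _ = ‖e 0‖ * lam ^ (k + 1) := by ring

theorem gd_interlaced_estimator_discrete_general
    (q : ℕ) (θ : Fin q → ℝ) (φ : ℕ → Fin q → ℝ)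
    (y : ℕ → ℝ) (hy : ∀ k, y k = φ k ⬝ᵥ θ)
    (γ : ℝ) (hγ : 0 < γ) (γg : ℕ → ℝ) (hγg : ∀ k, 0 < γg k)
    (A : ℕ → Matrix (Fin q) (Fin q) ℝ)
    (hA : ∀ k, A k = 1 - (γg k + φ k ⬝ᵥ φ k)⁻¹ • Matrix.vecMulVec (φ k) (φ k))
    (θg : ℕ → Fin q → ℝ) (θg0 : Fin q → ℝ) (hθg0 : θg 0 = θg0)
    (hθg : ∀ k, θg (k + 1) = θg k + ((y k - φ k ⬝ᵥ θg k) / (γg k + φ k ⬝ᵥ φ k)) • φ k)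
    (Φ : ℕ → Matrix (Fin q) (Fin q) ℝ) (hΦ0 : Φ 0 = 1)
    (hΦ : ∀ k, Φ (k + 1) = A k * Φ k)
    (D : ℕ → Matrix (Fin q) (Fin q) ℝ) (hD : ∀ k, D k = 1 - Φ k)
    (Δ : ℕ → ℝ) (hΔ : ∀ k, Δ k = (D k).det)
    (Y : ℕ → Fin q → ℝ) (hY : ∀ k, Y k = (D k).adjugate.mulVec (θg k - (Φ k).mulVec θg0))
    (θhat : ℕ → Fin q → ℝ)
    (hθhat : ∀ k, θhat (k + 1)
      = θhat k + (Δ k / (γ + (Δ k) ^ 2)) • (Y k - Δ k • θhat k))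
    -- interval excitation of φ
    (hIE : ∃ C_d : ℝ, 0 < C_d ∧ ∃ k_d : ℕ, 0 < k_d ∧
      (∑ j ∈ Finset.range (k_d + 1), Matrix.vecMulVec (φ j) (φ j)
        - C_d • (1 : Matrix (Fin q) (Fin q) ℝ)).PosSemidef) :
    ∃ M : ℝ, 0 ≤ M ∧ ∃ lam : ℝ, lam ∈ Set.Ioo (0 : ℝ) 1 ∧
      ∀ k : ℕ, Real.sqrt ((θhat k - θ) ⬝ᵥ (θhat k - θ)) ≤ M * lam ^ k := by
  obtain ⟨C, hC, kd, -, hPSD⟩ := hIE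
  have hΦA : ∀ k, Φ (k + 1) = normalizedGradientMatrix (γg k) (φ k) * Φ k :=
    fun k => (hΦ k).trans (by rw [hA k]; rfl)
  obtain ⟨δ, hδ, hΔδ⟩ := exists_pos_le_sq_det_one_sub_of_normalizedGradient hγg hC
    (mul_dotProduct_self_le_sum_sq_of_posSemidef hPSD) hΦ0 hΦA
  have hθg_err : ∀ k, θg k - θ = Φ k *ᵥ (θg0 - θ) := by
    refine hθg0 ▸ mulVec_eq_of_transition hΦ0 hΦA fun k => ?_
    rw [hθg, hy, normalizedGradientMatrix_mulVec_sub]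
  have hYθ : ∀ k, Y k = Δ k • θ := fun k => by
    have : θg k - Φ k *ᵥ θg0 = D k *ᵥ θ := by
      rw [hD, sub_mulVec, one_mulVec, sub_eq_sub_iff_sub_eq_sub, hθg_err, mulVec_sub]
    rw [hY, this, mulVec_mulVec, adjugate_mul, smul_mulVec, one_mulVec, hΔ]
  have herr : ∀ k, θhat (k + 1) - θ = (γ / (γ + Δ k ^ 2)) • (θhat k - θ) := fun k => by
    rw [hθhat, hYθ]
    match_scalars <;> field_simp <;> ring
  have hlam : γ / (γ + δ) < 1 := (div_lt_one (by positivity)).2 (by linarith)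
  refine ⟨‖WithLp.toLp 2 (θhat 0 - θ)‖ / (γ / (γ + δ)) ^ (kd + 1), by positivity, γ / (γ + δ),
    ⟨by positivity, hlam⟩, fun k => ?_⟩
  rw [sqrt_dotProduct_self]
  refine norm_le_div_pow_mul_pow_of_smul (e := fun k => WithLp.toLp 2 (θhat k - θ))
    (c := fun k => γ / (γ + Δ k ^ 2)) (by positivity) hlam.le (fun k => by positivity)
    (fun k => (div_le_one (by positivity)).2 (le_add_of_nonneg_right (sq_nonneg _)))
    (fun k hk => ?_) (fun k => by rw [herr, WithLp.toLp_smul]) k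
  refine div_le_div_of_nonneg_left hγ.le (by positivity) ?_
  rw [hΔ, hD]
  linarith [hΔδ k hk]

/-- Proposition 2 (discrete time): the G+D interlaced estimator converges
exponentially under interval excitation. -/
theorem gd_interlaced_estimator_discrete
    (q : ℕ) (hq : 0 < q) (θ : Fin q → ℝ) (φ : ℕ → Fin q → ℝ)
    (hφbdd : ∃ B : ℝ, ∀ k, Real.sqrt (φ k ⬝ᵥ φ k) ≤ B)
    (y : ℕ → ℝ) (hy : ∀ k, y k = φ k ⬝ᵥ θ)
    (γ : ℝ) (hγ : 0 < γ) (γg : ℕ → ℝ) (hγg : ∀ k, 0 < γg k)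
    (A : ℕ → Matrix (Fin q) (Fin q) ℝ)
    (hA : ∀ k, A k = 1 - (γg k + φ k ⬝ᵥ φ k)⁻¹ • Matrix.vecMulVec (φ k) (φ k))
    (θg : ℕ → Fin q → ℝ) (θg0 : Fin q → ℝ) (hθg0 : θg 0 = θg0)
    (hθg : ∀ k, θg (k + 1) = θg k + ((y k - φ k ⬝ᵥ θg k) / (γg k + φ k ⬝ᵥ φ k)) • φ k)
    (Φ : ℕ → Matrix (Fin q) (Fin q) ℝ) (hΦ0 : Φ 0 = 1)
    (hΦ : ∀ k, Φ (k + 1) = A k * Φ k)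
    (D : ℕ → Matrix (Fin q) (Fin q) ℝ) (hD : ∀ k, D k = 1 - Φ k)
    (Δ : ℕ → ℝ) (hΔ : ∀ k, Δ k = (D k).det)
    (Y : ℕ → Fin q → ℝ) (hY : ∀ k, Y k = (D k).adjugate.mulVec (θg k - (Φ k).mulVec θg0))
    (θhat : ℕ → Fin q → ℝ) (θ0 : Fin q → ℝ) (hθhat0 : θhat 0 = θ0)
    (hθhat : ∀ k, θhat (k + 1)
      = θhat k + (Δ k / (γ + (Δ k) ^ 2)) • (Y k - Δ k • θhat k))
    -- interval excitation of φ
    (hIE : ∃ C_d : ℝ, 0 < C_d ∧ ∃ k_d : ℕ, 0 < k_d ∧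
      (∑ j ∈ Finset.range (k_d + 1), Matrix.vecMulVec (φ j) (φ j)
        - C_d • (1 : Matrix (Fin q) (Fin q) ℝ)).PosSemidef) :
    ∃ M : ℝ, 0 ≤ M ∧ ∃ lam : ℝ, lam ∈ Set.Ioo (0 : ℝ) 1 ∧
      ∀ k : ℕ, Real.sqrt ((θhat k - θ) ⬝ᵥ (θhat k - θ)) ≤ M * lam ^ k :=
  gd_interlaced_estimator_discrete_general q θ φ y hy γ hγ γg hγg A hA θg θg0 hθg0 hθg Φ hΦ0 hΦ D hD
    Δ hΔ Y hY θhat hθhat hIE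
end

section
/- (Key extended LRE identity in the proof of Proposition 2, discrete time.) Let q be a positive integer, θ ∈ ℝ^q, φ : ℕ → ℝ^q, γ_g : ℕ → ℝ with γ_g(k) > 0 for all k, and y(k) = φ(k)ᵀθ. Define A(k) := I_q − φ(k)φ(k)ᵀ/(γ_g(k) + |φ(k)|²), the recursion θ̂_g(k+1) = θ̂_g(k) + φ(k)(y(k) − φ(k)ᵀθ̂_g(k))/(γ_g(k) + |φ(k)|²) with θ̂_g(0) = θ_{g0} ∈ ℝ^q, and Φ(k+1) = A(k)Φ(k) with Φ(0) = I_q. Then for all k ∈ ℕ: (I_q − Φ(k))θ = θ̂_g(k) − Φ(k)θ_{g0}, and consequently adj(I_q − Φ(k))·(θ̂_g(k) − Φ(k)θ_{g0}) = det(I_q − Φ(k))·θ. -/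
open Matrix

/-- Key extended LRE identity in the proof of Proposition 2 (discrete time):
`(I − Φ(k))·θ = θ̂_g(k) − Φ(k)·θ_{g0}` and the mixed scalar LRE obtained by
multiplying with the adjugate. -/
theorem gd_extended_lre_identity_discrete
    (q : ℕ) (hq : 0 < q) (θ : Fin q → ℝ) (φ : ℕ → Fin q → ℝ)
    (γg : ℕ → ℝ) (hγg : ∀ k, 0 < γg k)
    (y : ℕ → ℝ) (hy : ∀ k, y k = φ k ⬝ᵥ θ)
    (A : ℕ → Matrix (Fin q) (Fin q) ℝ)
    (hA : ∀ k, A k = 1 - (γg k + φ k ⬝ᵥ φ k)⁻¹ • Matrix.vecMulVec (φ k) (φ k))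
    (θg : ℕ → Fin q → ℝ) (θg0 : Fin q → ℝ) (hθg0 : θg 0 = θg0)
    (hθg : ∀ k, θg (k + 1) = θg k + ((y k - φ k ⬝ᵥ θg k) / (γg k + φ k ⬝ᵥ φ k)) • φ k)
    (Φ : ℕ → Matrix (Fin q) (Fin q) ℝ) (hΦ0 : Φ 0 = 1)
    (hΦ : ∀ k, Φ (k + 1) = A k * Φ k) :
    ∀ k : ℕ,
      ((1 : Matrix (Fin q) (Fin q) ℝ) - Φ k).mulVec θ = θg k - (Φ k).mulVec θg0 ∧
      ((1 : Matrix (Fin q) (Fin q) ℝ) - Φ k).adjugate.mulVec (θg k - (Φ k).mulVec θg0)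
        = ((1 : Matrix (Fin q) (Fin q) ℝ) - Φ k).det • θ := by
  have key : ∀ k, θg k - θ = (Φ k).mulVec (θg0 - θ) := by
    intro k
    induction k with
    | zero => simp [hθg0, hΦ0]
    | succ k ih =>
      have hden : γg k + φ k ⬝ᵥ φ k ≠ 0 := by
        have h0 : (0:ℝ) ≤ φ k ⬝ᵥ φ k :=
          Finset.sum_nonneg fun i _ => mul_self_nonneg _
        nlinarith [hγg k]
      have hv : (Matrix.vecMulVec (φ k) (φ k)).mulVec (θg k - θ)
          = (φ k ⬝ᵥ (θg k - θ)) • φ k := by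
        funext i
        simp only [mulVec, vecMulVec_apply, dotProduct, Pi.smul_apply,
          smul_eq_mul, Finset.sum_mul]
        exact Finset.sum_congr rfl fun j _ => by ring
      have hmul : (A k).mulVec (θg k - θ) = θg (k + 1) - θ := by
        rw [hA, hθg, hy, sub_mulVec, one_mulVec, smul_mulVec, hv]
        have hd : φ k ⬝ᵥ θ - φ k ⬝ᵥ θg k = -(φ k ⬝ᵥ (θg k - θ)) := by
          simp [dotProduct_sub]
        rw [hd]
        funext i
        simp only [Pi.sub_apply, Pi.add_apply, Pi.smul_apply, smul_eq_mul]
        field_simp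
        ring
      rw [hΦ, ← mulVec_mulVec, ← ih, hmul]
  intro k
  have h1 : ((1 : Matrix (Fin q) (Fin q) ℝ) - Φ k).mulVec θ
      = θg k - (Φ k).mulVec θg0 := by
    have := key k
    rw [sub_mulVec, one_mulVec]
    have h2 : (Φ k).mulVec (θg0 - θ) = (Φ k).mulVec θg0 - (Φ k).mulVec θ := by
      rw [mulVec_sub]
    rw [h2] at this
    funext i
    have := congrFun this i
    simp only [Pi.sub_apply] at this ⊢
    linarith
  refine ⟨h1, ?_⟩
  rw [← h1, mulVec_mulVec, adjugate_mul, smul_mulVec, one_mulVec]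
end

section
/- (Proposition 3, discrete time: DREM perspective of the G+D estimator.) Let q be a positive integer, θ ∈ ℝ^q, φ : ℕ → ℝ^q, γ_g : ℕ → ℝ with γ_g(k) > 0, and y(k) = φ(k)ᵀθ. Set 𝔤(k) := 1/(γ_g(k) + |φ(k)|²) and A(k) := I_q − 𝔤(k)φ(k)φ(k)ᵀ. Define θ̂_g(k+1) = θ̂_g(k) + 𝔤(k)φ(k)(y(k) − φ(k)ᵀθ̂_g(k)) with θ̂_g(0) = θ_{g0} ∈ ℝ^q; Φ(k+1) = A(k)Φ(k) with Φ(0) = I_q; x_y(k+1) = A(k)x_y(k) + 𝔤(k)φ(k)y(k) with x_y(0) = 0; and, for each i ∈ {1,…,q}, x_{φ,i}(k+1) = A(k)x_{φ,i}(k) + 𝔤(k)φ(k)φ_i(k) with x_{φ,i}(0) = 0, where φ_i(k) is the i-th component of φ(k). Then for all k ∈ ℕ: θ̂_g(k) − Φ(k)θ_{g0} = x_y(k), and I_q − Φ(k) equals the matrix whose i-th column is x_{φ,i}(k). -/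
open Matrix

lemma vecMulVec_mulVec' {q : ℕ} (w v u : Fin q → ℝ) :
    (Matrix.vecMulVec w v).mulVec u = (v ⬝ᵥ u) • w := by
  ext i
  simp [Matrix.mulVec, Matrix.vecMulVec_apply, dotProduct, Finset.mul_sum, Finset.sum_mul,
    mul_assoc, mul_comm, mul_left_comm]

/-- Proposition 3 (discrete time): DREM perspective of the G+D estimator. The
extended regression data generated by the operator `𝓗` coincides with
`θ̂_g − Φ θ_{g0}` and `I − Φ`. -/
theorem drem_perspective_discrete
    (q : ℕ) (hq : 0 < q) (θ : Fin q → ℝ) (φ : ℕ → Fin q → ℝ)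
    (γg : ℕ → ℝ) (hγg : ∀ k, 0 < γg k)
    (y : ℕ → ℝ) (hy : ∀ k, y k = φ k ⬝ᵥ θ)
    (g : ℕ → ℝ) (hg : ∀ k, g k = (γg k + φ k ⬝ᵥ φ k)⁻¹)
    (A : ℕ → Matrix (Fin q) (Fin q) ℝ)
    (hA : ∀ k, A k = 1 - g k • Matrix.vecMulVec (φ k) (φ k))
    (θg : ℕ → Fin q → ℝ) (θg0 : Fin q → ℝ) (hθg0 : θg 0 = θg0)
    (hθg : ∀ k, θg (k + 1) = θg k + (g k * (y k - φ k ⬝ᵥ θg k)) • φ k)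
    (Φ : ℕ → Matrix (Fin q) (Fin q) ℝ) (hΦ0 : Φ 0 = 1)
    (hΦ : ∀ k, Φ (k + 1) = A k * Φ k)
    (xy : ℕ → Fin q → ℝ) (hxy0 : xy 0 = 0)
    (hxy : ∀ k, xy (k + 1) = (A k).mulVec (xy k) + (g k * y k) • φ k)
    (xφ : Fin q → ℕ → Fin q → ℝ) (hxφ0 : ∀ i, xφ i 0 = 0)
    (hxφ : ∀ i k, xφ i (k + 1) = (A k).mulVec (xφ i k) + (g k * φ k i) • φ k) :
    ∀ k : ℕ, θg k - (Φ k).mulVec θg0 = xy k ∧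
      (1 : Matrix (Fin q) (Fin q) ℝ) - Φ k = Matrix.of (fun i j => xφ j k i) := by
  intro k
  induction k with
  | zero =>
    constructor
    · simp [hθg0, hΦ0, hxy0, Matrix.one_mulVec]
    · ext i j
      simp [hΦ0, hxφ0]
  | succ k ih =>
    obtain ⟨ih1, ih2⟩ := ih
    constructor
    · rw [hθg, hΦ, hxy, ← ih1, ← Matrix.mulVec_mulVec, hA]
      simp only [Matrix.sub_mulVec, Matrix.one_mulVec, Matrix.smul_mulVec,
        vecMulVec_mulVec', dotProduct_sub]
      module
    · have key : (1 : Matrix (Fin q) (Fin q) ℝ) - Φ (k + 1)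
          = g k • Matrix.vecMulVec (φ k) (φ k) + A k * ((1 : Matrix (Fin q) (Fin q) ℝ) - Φ k) := by
        rw [hΦ, Matrix.mul_sub, mul_one, hA]
        abel
      rw [key]
      ext i j
      have hcol : ∀ l, xφ j k l = ((1 : Matrix (Fin q) (Fin q) ℝ) - Φ k) l j := by
        intro l; rw [ih2]; rfl
      simp only [Matrix.add_apply, Matrix.smul_apply, Matrix.vecMulVec_apply,
        smul_eq_mul, Matrix.mul_apply, Matrix.of_apply, hxφ, Pi.add_apply,
        Pi.smul_apply, Matrix.mulVec, dotProduct, hcol]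
      ring
end

section
/- (Proposition 4, discrete-time BIBO stability of the operator 𝓗.) Let q be a positive integer, φ : ℕ → ℝ^q, γ_g : ℕ → ℝ with γ_g(k) > 0 and Σ_{k=0}^∞ 1/γ_g(k) < ∞, and let d : ℕ → ℝ be a bounded sequence. Then every solution x_d : ℕ → ℝ^q of x_d(k+1) = (I_q − φ(k)φ(k)ᵀ/(γ_g(k) + |φ(k)|²))·x_d(k) + φ(k)d(k)/(γ_g(k) + |φ(k)|²) is bounded; in fact |x_d(k)|² ≤ |x_d(0)|² + (sup_j |d(j)|)²·Σ_{j=0}^{k−1} 4/γ_g(j) for all k. -/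
open Matrix

lemma bibo_step_aux (q : ℕ) (v x : Fin q → ℝ) (g dd : ℝ) (hg : 0 < g) :
    (((1 : Matrix (Fin q) (Fin q) ℝ) - (g + v ⬝ᵥ v)⁻¹ • vecMulVec v v).mulVec x
      + (dd / (g + v ⬝ᵥ v)) • v) ⬝ᵥ
    (((1 : Matrix (Fin q) (Fin q) ℝ) - (g + v ⬝ᵥ v)⁻¹ • vecMulVec v v).mulVec x
      + (dd / (g + v ⬝ᵥ v)) • v) ≤ x ⬝ᵥ x + dd ^ 2 / g := by
  have hs : 0 ≤ v ⬝ᵥ v := Fintype.sum_nonneg fun i => mul_self_nonneg (v i)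
  set s := v ⬝ᵥ v with hsdef
  have hgs : 0 < g + s := by linarith
  have hy : ((1 : Matrix (Fin q) (Fin q) ℝ) - (g + s)⁻¹ • vecMulVec v v).mulVec x
      + (dd / (g + s)) • v = x + ((dd - v ⬝ᵥ x) / (g + s)) • v := by
    funext i
    simp [Matrix.sub_mulVec, Matrix.one_mulVec, Matrix.smul_mulVec,
      Matrix.mulVec, Matrix.vecMulVec_apply, dotProduct, Finset.mul_sum,
      Finset.sum_div, sub_div, div_eq_mul_inv]
    have h : ∑ j, (g + s)⁻¹ * (v i * v j * x j)
        = (∑ j, v j * x j) * (g + s)⁻¹ * v i := by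
      rw [Finset.sum_mul, Finset.sum_mul]
      exact Finset.sum_congr rfl fun j _ => by ring
    rw [h]; ring
  rw [hy]
  set c := v ⬝ᵥ x with hcdef
  have hcx : x ⬝ᵥ v = c := dotProduct_comm x v
  set t := (dd - c) / (g + s) with htdef
  have hexp : (x + t • v) ⬝ᵥ (x + t • v) = x ⬝ᵥ x + 2 * t * c + t ^ 2 * s := by
    simp [dotProduct_add, add_dotProduct, dotProduct_smul, smul_dotProduct, hcx,
      dotProduct_comm v x, ← hcdef, ← hsdef, smul_eq_mul]
    ring
  rw [hexp]
  have hone : 2 * t * c + t ^ 2 * s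
      = (2 * c * (dd - c) * (g + s) + (dd - c) ^ 2 * s) / (g + s) ^ 2 := by
    rw [htdef]; field_simp
  have key : 2 * t * c + t ^ 2 * s ≤ dd ^ 2 / g := by
    rw [hone, div_le_div_iff₀ (by positivity) hg]
    nlinarith [mul_nonneg (mul_nonneg hs hgs.le) (sq_nonneg dd),
      mul_nonneg (mul_nonneg hg.le hgs.le) (sq_nonneg c),
      mul_nonneg (mul_nonneg hg.le hg.le) (sq_nonneg (dd - c))]
  linarith

/-- Proposition 4 (discrete time): BIBO stability of the operator `𝓗` when
`Σ 1/γ_g(k) < ∞` and the disturbance `d` is bounded. -/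
theorem bibo_stability_discrete
    (q : ℕ) (hq : 0 < q) (φ : ℕ → Fin q → ℝ)
    (γg : ℕ → ℝ) (hγg : ∀ k, 0 < γg k)
    (hγgsum : Summable (fun k => 1 / γg k))
    (d : ℕ → ℝ) (hd : ∃ B : ℝ, ∀ k, |d k| ≤ B)
    (xd : ℕ → Fin q → ℝ)
    (hxd : ∀ k, xd (k + 1)
      = ((1 : Matrix (Fin q) (Fin q) ℝ)
          - (γg k + φ k ⬝ᵥ φ k)⁻¹ • Matrix.vecMulVec (φ k) (φ k)).mulVec (xd k)
        + (d k / (γg k + φ k ⬝ᵥ φ k)) • φ k) :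
    (∃ B : ℝ, ∀ k, Real.sqrt (xd k ⬝ᵥ xd k) ≤ B) ∧
      ∀ k : ℕ, xd k ⬝ᵥ xd k
        ≤ xd 0 ⬝ᵥ xd 0 + (⨆ j, |d j|) ^ 2 * ∑ j ∈ Finset.range k, 4 / γg j := by
  obtain ⟨B, hB⟩ := hd
  set D := ⨆ j, |d j| with hD
  have hbdd : BddAbove (Set.range fun j => |d j|) := ⟨B, by rintro _ ⟨j, rfl⟩; exact hB j⟩
  have hdD : ∀ k, |d k| ≤ D := fun k => le_ciSup hbdd k
  have hD0 : 0 ≤ D := le_trans (abs_nonneg _) (hdD 0)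
  have hstep : ∀ k, xd (k + 1) ⬝ᵥ xd (k + 1) ≤ xd k ⬝ᵥ xd k + D ^ 2 * (4 / γg k) := by
    intro k
    rw [hxd k]
    refine le_trans (bibo_step_aux q (φ k) (xd k) (γg k) (d k) (hγg k)) ?_
    have h1 : (d k) ^ 2 / γg k ≤ D ^ 2 * (4 / γg k) := by
      rw [mul_div_assoc', div_le_div_iff₀ (hγg k) (hγg k)]
      have h2 : (d k) ^ 2 ≤ D ^ 2 := by
        nlinarith [hdD k, abs_nonneg (d k), sq_abs (d k)]
      nlinarith [hγg k, sq_nonneg D]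
    linarith
  have main : ∀ k : ℕ, xd k ⬝ᵥ xd k
      ≤ xd 0 ⬝ᵥ xd 0 + D ^ 2 * ∑ j ∈ Finset.range k, 4 / γg j := by
    intro k
    induction k with
    | zero => simp
    | succ n ih =>
      rw [Finset.sum_range_succ, mul_add]
      have := hstep n
      linarith
  refine ⟨?_, main⟩
  have hsum4 : Summable (fun k => 4 / γg k) := by
    have := hγgsum.mul_left 4
    simpa [div_eq_mul_inv, mul_assoc, one_div] using this
  have htsum : ∀ k, ∑ j ∈ Finset.range k, 4 / γg j ≤ ∑' j, 4 / γg j := fun k =>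
    Summable.sum_le_tsum _ (fun j _ => div_nonneg (by norm_num) (hγg j).le) hsum4
  refine ⟨Real.sqrt (xd 0 ⬝ᵥ xd 0 + D ^ 2 * ∑' j, 4 / γg j), fun k => ?_⟩
  apply Real.sqrt_le_sqrt
  have := main k
  nlinarith [htsum k, sq_nonneg D]
end

section
/- (Proposition 4, continuous-time BIBO stability of the operator 𝓗.) Let q be a positive integer, φ : [0,∞) → ℝ^q continuous, γ_g : [0,∞) → ℝ continuous with γ_g(t) > 0 and ∫₀^∞ γ_g(t) dt < ∞, and d : [0,∞) → ℝ continuous and bounded. Let x_d : [0,∞) → ℝ^q be differentiable with x_d'(t) = −γ_g(t)·φ(t)φ(t)ᵀ·x_d(t) + γ_g(t)·φ(t)·d(t). Then x_d is bounded; in fact |x_d(t)|² ≤ |x_d(0)|² + (sup_{s≥0} |d(s)|)²·∫₀^t γ_g(s) ds for all t ≥ 0, and along trajectories V(t) := |x_d(t)|² satisfies V'(t) ≤ −γ_g(t)|φ(t)ᵀx_d(t)|² + γ_g(t)|d(t)|². -/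
/-!
Along trajectories, `V = |x_d|²` has derivative `-2γ_g p² + 2γ_g d p` with `p = φᵀx_d`, and
completing the square (`γ_g (p - d)² ≥ 0`) bounds it by `-γ_g p² + γ_g d² ≤ γ_g (sup |d|)²`.
Integrating gives the energy estimate, which is uniform in `t` because `γ_g` is integrable.
-/

open Matrix MeasureTheory

theorem HasDerivAt.dotProduct {𝕜 ι : Type*} [NontriviallyNormedField 𝕜] [Fintype ι]
    {f g : 𝕜 → ι → 𝕜} {f' g' : ι → 𝕜} {t : 𝕜}
    (hf : HasDerivAt f f' t) (hg : HasDerivAt g g' t) :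
    HasDerivAt (fun s => f s ⬝ᵥ g s) (f' ⬝ᵥ g t + f t ⬝ᵥ g') t := by
  have h : HasDerivAt (fun s => ∑ i, f s i * g s i) (∑ i, (f' i * g t i + f t i * g' i)) t :=
    HasDerivAt.fun_sum fun i _ => (hasDerivAt_pi.1 hf i).mul (hasDerivAt_pi.1 hg i)
  rw [Finset.sum_add_distrib] at h
  exact h

theorem HasDerivAt.dotProduct_self {𝕜 ι : Type*} [NontriviallyNormedField 𝕜] [Fintype ι]
    {f : 𝕜 → ι → 𝕜} {f' : ι → 𝕜} {t : 𝕜}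
    (hf : HasDerivAt f f' t) :
    HasDerivAt (fun s => f s ⬝ᵥ f s) (2 * (f t ⬝ᵥ f')) t := by
  simpa only [dotProduct_comm f', two_mul] using hf.dotProduct hf

theorem two_mul_dotProduct_vecMulVec_flow_le {ι : Type*} [Fintype ι] (u x : ι → ℝ) (e : ℝ)
    {g : ℝ} (hg : 0 ≤ g) :
    2 * (x ⬝ᵥ (-g • vecMulVec u u *ᵥ x + (g * e) • u)) ≤ -g * (u ⬝ᵥ x) ^ 2 + g * |e| ^ 2 := by
  have hflow : x ⬝ᵥ (-g • vecMulVec u u *ᵥ x + (g * e) • u)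
      = -g * (u ⬝ᵥ x) ^ 2 + g * e * (u ⬝ᵥ x) := by
    rw [vecMulVec_mulVec, op_smul_eq_smul, dotProduct_add, dotProduct_smul, dotProduct_smul,
      dotProduct_smul, dotProduct_comm x u, smul_eq_mul, smul_eq_mul, smul_eq_mul]
    ring
  rw [hflow, sq_abs]
  nlinarith [mul_nonneg hg (sq_nonneg (u ⬝ᵥ x - e))]

theorem le_add_integral_of_hasDerivAt_le {f f' g : ℝ → ℝ} {a b : ℝ} (hab : a ≤ b)
    (hf : ∀ t ∈ Set.Icc a b, HasDerivAt f (f' t) t) (hg : IntegrableOn g (Set.Icc a b))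
    (hf'g : ∀ t ∈ Set.Ioo a b, f' t ≤ g t) :
    f b ≤ f a + ∫ t in a..b, g t := by
  have := intervalIntegral.sub_le_integral_of_hasDeriv_right_of_le hab
    (fun t ht => (hf t ht).continuousAt.continuousWithinAt)
    (fun t ht => (hf t (Set.Ioo_subset_Icc_self ht)).hasDerivWithinAt) hg hf'g
  linarith

theorem intervalIntegral_le_setIntegral_Ici {g : ℝ → ℝ} {t : ℝ} (ht : 0 ≤ t)
    (hg : IntegrableOn g (Set.Ici 0)) (hg0 : ∀ s ≥ 0, 0 ≤ g s) :
    ∫ s in (0 : ℝ)..t, g s ≤ ∫ s in Set.Ici 0, g s := by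
  rw [intervalIntegral.integral_of_le ht]
  refine setIntegral_mono_set hg ?_ (Filter.Eventually.of_forall fun s hs => Set.mem_Ici.2 hs.1.le)
  filter_upwards [ae_restrict_mem measurableSet_Ici] with s hs using hg0 s hs

theorem bibo_stability_continuous_general
    (q : ℕ) (φ : ℝ → Fin q → ℝ)
    (γg : ℝ → ℝ)
    (hγgpos : ∀ t ≥ (0 : ℝ), 0 < γg t)
    (hγgint : MeasureTheory.IntegrableOn γg (Set.Ici 0))
    (d : ℝ → ℝ)
    (hdbdd : ∃ B : ℝ, ∀ t ≥ (0 : ℝ), |d t| ≤ B)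
    (xd : ℝ → Fin q → ℝ)
    (hxd : ∀ t ≥ (0 : ℝ), HasDerivAt xd
      (-(γg t) • (Matrix.vecMulVec (φ t) (φ t)).mulVec (xd t) + (γg t * d t) • φ t) t) :
    (∃ B : ℝ, ∀ t ≥ (0 : ℝ), Real.sqrt (xd t ⬝ᵥ xd t) ≤ B) ∧
    (∀ t ≥ (0 : ℝ), xd t ⬝ᵥ xd t
      ≤ xd 0 ⬝ᵥ xd 0 + (sSup ((fun s => |d s|) '' Set.Ici 0)) ^ 2 * ∫ s in (0 : ℝ)..t, γg s) ∧
    (∀ t ≥ (0 : ℝ), ∀ v' : ℝ, HasDerivAt (fun s => xd s ⬝ᵥ xd s) v' t →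
      v' ≤ -(γg t) * (φ t ⬝ᵥ xd t) ^ 2 + γg t * |d t| ^ 2) := by
  set M := sSup ((fun s => |d s|) '' Set.Ici 0)
  have hdM : ∀ t ≥ (0 : ℝ), |d t| ≤ M := by
    obtain ⟨B, hB⟩ := hdbdd
    exact fun t ht => le_csSup ⟨B, by rintro _ ⟨s, hs, rfl⟩; exact hB s hs⟩ ⟨t, ht, rfl⟩
  have hV := fun t (ht : t ≥ (0 : ℝ)) => (hxd t ht).dotProduct_self
  have hV_le := fun t (ht : t ≥ (0 : ℝ)) =>
    two_mul_dotProduct_vecMulVec_flow_le (φ t) (xd t) (d t) (hγgpos t ht).le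
  have hV_le_sup : ∀ t ≥ (0 : ℝ), 2 * (xd t ⬝ᵥ
      (-(γg t) • vecMulVec (φ t) (φ t) *ᵥ xd t + (γg t * d t) • φ t)) ≤ M ^ 2 * γg t := by
    intro t ht
    have hd2 : |d t| ^ 2 ≤ M ^ 2 := pow_le_pow_left₀ (abs_nonneg _) (hdM t ht) 2
    nlinarith [hV_le t ht, hγgpos t ht, sq_nonneg (φ t ⬝ᵥ xd t)]
  have henergy : ∀ t ≥ (0 : ℝ),
      xd t ⬝ᵥ xd t ≤ xd 0 ⬝ᵥ xd 0 + M ^ 2 * ∫ s in (0 : ℝ)..t, γg s := by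
    intro t ht
    rw [← intervalIntegral.integral_const_mul]
    exact le_add_integral_of_hasDerivAt_le ht (fun s hs => hV s hs.1)
      ((hγgint.mono_set Set.Icc_subset_Ici_self).const_mul _) fun s hs => hV_le_sup s hs.1.le
  refine ⟨⟨√(xd 0 ⬝ᵥ xd 0 + M ^ 2 * ∫ s in Set.Ici 0, γg s), fun t ht => ?_⟩, henergy,
    fun t ht v' hv' => hv'.unique (hV t ht) ▸ hV_le t ht⟩
  refine Real.sqrt_le_sqrt ((henergy t ht).trans ?_)
  gcongr
  exact intervalIntegral_le_setIntegral_Ici ht hγgint fun s hs => (hγgpos s hs).le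

/-- Proposition 4 (continuous time): BIBO stability of the operator `𝓗` when
`∫₀^∞ γ_g < ∞` and the disturbance `d` is bounded. -/
theorem bibo_stability_continuous
    (q : ℕ) (hq : 0 < q) (φ : ℝ → Fin q → ℝ) (hφcont : ContinuousOn φ (Set.Ici 0))
    (γg : ℝ → ℝ) (hγgcont : ContinuousOn γg (Set.Ici 0))
    (hγgpos : ∀ t ≥ (0 : ℝ), 0 < γg t)
    (hγgint : MeasureTheory.IntegrableOn γg (Set.Ici 0))
    (d : ℝ → ℝ) (hdcont : ContinuousOn d (Set.Ici 0))
    (hdbdd : ∃ B : ℝ, ∀ t ≥ (0 : ℝ), |d t| ≤ B)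
    (xd : ℝ → Fin q → ℝ)
    (hxd : ∀ t ≥ (0 : ℝ), HasDerivAt xd
      (-(γg t) • (Matrix.vecMulVec (φ t) (φ t)).mulVec (xd t) + (γg t * d t) • φ t) t) :
    (∃ B : ℝ, ∀ t ≥ (0 : ℝ), Real.sqrt (xd t ⬝ᵥ xd t) ≤ B) ∧
    (∀ t ≥ (0 : ℝ), xd t ⬝ᵥ xd t
      ≤ xd 0 ⬝ᵥ xd 0 + (sSup ((fun s => |d s|) '' Set.Ici 0)) ^ 2 * ∫ s in (0 : ℝ)..t, γg s) ∧
    (∀ t ≥ (0 : ℝ), ∀ v' : ℝ, HasDerivAt (fun s => xd s ⬝ᵥ xd s) v' t →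
      v' ≤ -(γg t) * (φ t ⬝ᵥ xd t) ^ 2 + γg t * |d t| ^ 2) :=
  bibo_stability_continuous_general q φ γg hγgpos hγgint d hdbdd xd hxd
end

section
/- (Proposition 5: generation of an unperturbed LRE under a sinusoidal disturbance.) Let θ ∈ ℝ, μ = (μ₁, μ₂) ∈ ℝ², and let Δ_F, Y_F, ξ_F : [0,∞) → ℝ and φ : [0,∞) → ℝ² be continuous functions satisfying Y_F(t) = Δ_F(t)·θ + ξ_F(t) and ξ_F(t) = φ(t)ᵀμ for all t ≥ 0. Define A_ξ(t) := [[0, Δ_F(t)], [−Δ_F(t), −1]] ∈ ℝ^{2×2}, e₂ := (0,1)ᵀ, and let z : [0,∞) → ℝ, r : [0,∞) → ℝ², Ω : [0,∞) → ℝ^{2×2}, Φ_ξ : [0,∞) → ℝ^{2×2} be differentiable solutions of z'(t) = −z(t) − Y_F(t) with z(0) = 0; r'(t) = A_ξ(t)·r(t) + (−Δ_F(t)·z(t), 0)ᵀ with r(0) = 0; Ω'(t) = A_ξ(t)·Ω(t) − e₂·φ(t)ᵀ with Ω(0) = 0; and Φ_ξ'(t) = A_ξ(t)·Φ_ξ(t)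 with Φ_ξ(0) = I₂. Then for all t ≥ 0: z(t) − r₂(t) = (Φ_ξ)_{2,1}(t)·θ + Ω_{2,1}(t)·μ₁ + Ω_{2,2}(t)·μ₂. -/
/-!
The error `e := r + Φξ (θ, 0)ᵀ + Ω μ - (θ, z)ᵀ` satisfies `ė = A_ξ e`, `e(0) = 0`:
the forcing terms of `r`, `Ω` and the equation for `z` cancel exactly because `Y_F = Δ_F θ + φᵀ μ`.
Since `⟨A_ξ v, v⟩ = -v₂² ≤ 0`, the energy `‖e‖²` is nonincreasing, hence `e ≡ 0` on `[0, ∞)`;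
the second coordinate of `e = 0` is the claimed identity.
-/

open Matrix

open scoped RealInnerProductSpace in
theorem eq_zero_of_hasDerivAt_of_inner_nonpos {E : Type*} [NormedAddCommGroup E]
    [InnerProductSpace ℝ E] {e e' : ℝ → E} (he : ∀ t ≥ (0 : ℝ), HasDerivAt e (e' t) t)
    (hdiss : ∀ t ≥ (0 : ℝ), ⟪e t, e' t⟫ ≤ 0) (h0 : e 0 = 0) :
    ∀ t ≥ (0 : ℝ), e t = 0 := by
  have hderiv : ∀ t ≥ (0 : ℝ), HasDerivAt (‖e ·‖ ^ 2) (2 * ⟪e t, e' t⟫) t :=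
    fun t ht => (he t ht).norm_sq
  have hanti : AntitoneOn (‖e ·‖ ^ 2) (Set.Ici 0) :=
    antitoneOn_of_hasDerivWithinAt_nonpos (convex_Ici 0)
      (fun t ht => (hderiv t ht).continuousAt.continuousWithinAt)
      (fun t ht => (hderiv t (interior_subset ht)).hasDerivWithinAt)
      (fun t ht => by nlinarith [hdiss t (interior_subset ht)])
  intro t ht
  have : ‖e t‖ ^ 2 ≤ ‖e 0‖ ^ 2 := hanti Set.self_mem_Ici ht ht
  simpa [h0] using this

theorem eq_zero_of_hasDerivAt_mulVec {n : Type*} [Fintype n] (A : ℝ → Matrix n n ℝ)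
    {e : ℝ → n → ℝ} (he : ∀ t ≥ (0 : ℝ), HasDerivAt e (A t *ᵥ e t) t)
    (hA : ∀ t ≥ (0 : ℝ), ∀ v, A t *ᵥ v ⬝ᵥ v ≤ 0) (h0 : e 0 = 0) :
    ∀ t ≥ (0 : ℝ), e t = 0 := by
  have key := eq_zero_of_hasDerivAt_of_inner_nonpos (e := fun t => WithLp.toLp 2 (e t))
    (fun t ht => (PiLp.continuousLinearEquiv 2 ℝ _).symm.hasFDerivAt.comp_hasDerivAt t (he t ht))
    (fun t ht => by simpa [EuclideanSpace.inner_toLp_toLp] using hA t ht (e t)) (by simp [h0])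
  intro t ht
  simpa using key t ht

theorem hasDerivAt_mulVec {m n : Type*} [Fintype n] {M : ℝ → Matrix m n ℝ} {M' : Matrix m n ℝ}
    {t : ℝ} (hM : ∀ i j, HasDerivAt (fun s => M s i j) (M' i j) t) (c : n → ℝ) :
    HasDerivAt (fun s => M s *ᵥ c) (M' *ᵥ c) t :=
  hasDerivAt_pi.2 fun i => by
    simpa [mulVec, dotProduct] using HasDerivAt.fun_sum fun j _ => (hM i j).mul_const (c j)

theorem mulVec_dotProduct_self_nonpos (a : ℝ) (v : Fin 2 → ℝ) :
    !![0, a; -a, -1] *ᵥ v ⬝ᵥ v ≤ 0 := by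
  simp only [mulVec_fin_two, dotProduct, Fin.sum_univ_two, of_apply, cons_val', cons_val_zero,
    cons_val_one, cons_val_fin_one]
  nlinarith [sq_nonneg (v 1)]

theorem gpebo_disturbance_lre_general
    (θ μ₁ μ₂ : ℝ)
    (ΔF YF ξF : ℝ → ℝ) (φ : ℝ → Fin 2 → ℝ)
    (hYF : ∀ t ≥ (0 : ℝ), YF t = ΔF t * θ + ξF t)
    (hξF : ∀ t ≥ (0 : ℝ), ξF t = φ t ⬝ᵥ ![μ₁, μ₂])
    (Aξ : ℝ → Matrix (Fin 2) (Fin 2) ℝ)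
    (hAξ : ∀ t, Aξ t = !![0, ΔF t; -ΔF t, -1])
    (z : ℝ → ℝ) (hz0 : z 0 = 0)
    (hz : ∀ t ≥ (0 : ℝ), HasDerivAt z (-(z t) - YF t) t)
    (r : ℝ → Fin 2 → ℝ) (hr0 : r 0 = 0)
    (hr : ∀ t ≥ (0 : ℝ), HasDerivAt r
      ((Aξ t).mulVec (r t) + ![-(ΔF t * z t), 0]) t)
    (Ω : ℝ → Matrix (Fin 2) (Fin 2) ℝ) (hΩ0 : Ω 0 = 0)
    (hΩ : ∀ t ≥ (0 : ℝ), ∀ i j, HasDerivAt (fun s => Ω s i j)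
      ((Aξ t * Ω t - Matrix.vecMulVec ![0, 1] (φ t)) i j) t)
    (Φξ : ℝ → Matrix (Fin 2) (Fin 2) ℝ) (hΦξ0 : Φξ 0 = 1)
    (hΦξ : ∀ t ≥ (0 : ℝ), ∀ i j, HasDerivAt (fun s => Φξ s i j)
      ((Aξ t * Φξ t) i j) t) :
    ∀ t ≥ (0 : ℝ),
      z t - r t 1 = Φξ t 1 0 * θ + Ω t 1 0 * μ₁ + Ω t 1 1 * μ₂ := by
  set e : ℝ → Fin 2 → ℝ := fun t => r t + Φξ t *ᵥ ![θ, 0] + Ω t *ᵥ ![μ₁, μ₂] - ![θ, z t]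
  have he : ∀ t ≥ (0 : ℝ), HasDerivAt e (Aξ t *ᵥ e t) t := by
    intro t ht
    have hθz : HasDerivAt (fun s => ![θ, z s]) ![0, -(z t) - YF t] t :=
      hasDerivAt_pi.2 fun i => by fin_cases i; exacts [hasDerivAt_const t θ, hz t ht]
    have hAθz : Aξ t *ᵥ ![θ, z t] = ![ΔF t * z t, -(ΔF t * θ) - z t] := by
      rw [hAξ]; ext i; fin_cases i <;> simp <;> ring
    have hdist : vecMulVec ![0, 1] (φ t) *ᵥ ![μ₁, μ₂] = ![0, ξF t] := by
      rw [vecMulVec_mulVec, ← hξF t ht]; ext i; fin_cases i <;> simp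
    refine (((hr t ht).add (hasDerivAt_mulVec (hΦξ t ht) _)).add
      (hasDerivAt_mulVec (hΩ t ht) _)).sub hθz |>.congr_deriv ?_
    rw [sub_mulVec, ← mulVec_mulVec, ← mulVec_mulVec, hdist, mulVec_sub, mulVec_add, mulVec_add,
      hAθz]
    ext i
    fin_cases i <;> simp [hYF t ht] <;> ring
  have he0 : e 0 = 0 := by
    ext i; fin_cases i <;> simp [e, hr0, hΦξ0, hΩ0, hz0]
  intro t ht
  have := congrFun (eq_zero_of_hasDerivAt_mulVec Aξ he
    (fun s _ v => hAξ s ▸ mulVec_dotProduct_self_nonpos (ΔF s) v) he0 t ht) 1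
  simp only [e, Pi.sub_apply, Pi.add_apply, mulVec_fin_two, cons_val_zero, cons_val_one,
    cons_val_fin_one, mul_zero, Pi.zero_apply] at this
  linarith

/-- Proposition 5: generation of an unperturbed LRE under a (filtered)
sinusoidal disturbance via the GPEBO dynamic extension. -/
theorem gpebo_disturbance_lre
    (θ μ₁ μ₂ : ℝ)
    (ΔF YF ξF : ℝ → ℝ) (φ : ℝ → Fin 2 → ℝ)
    (hΔFcont : ContinuousOn ΔF (Set.Ici 0))
    (hYFcont : ContinuousOn YF (Set.Ici 0))
    (hξFcont : ContinuousOn ξF (Set.Ici 0))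
    (hφcont : ContinuousOn φ (Set.Ici 0))
    (hYF : ∀ t ≥ (0 : ℝ), YF t = ΔF t * θ + ξF t)
    (hξF : ∀ t ≥ (0 : ℝ), ξF t = φ t ⬝ᵥ ![μ₁, μ₂])
    (Aξ : ℝ → Matrix (Fin 2) (Fin 2) ℝ)
    (hAξ : ∀ t, Aξ t = !![0, ΔF t; -ΔF t, -1])
    (z : ℝ → ℝ) (hz0 : z 0 = 0)
    (hz : ∀ t ≥ (0 : ℝ), HasDerivAt z (-(z t) - YF t) t)
    (r : ℝ → Fin 2 → ℝ) (hr0 : r 0 = 0)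
    (hr : ∀ t ≥ (0 : ℝ), HasDerivAt r
      ((Aξ t).mulVec (r t) + ![-(ΔF t * z t), 0]) t)
    (Ω : ℝ → Matrix (Fin 2) (Fin 2) ℝ) (hΩ0 : Ω 0 = 0)
    (hΩ : ∀ t ≥ (0 : ℝ), ∀ i j, HasDerivAt (fun s => Ω s i j)
      ((Aξ t * Ω t - Matrix.vecMulVec ![0, 1] (φ t)) i j) t)
    (Φξ : ℝ → Matrix (Fin 2) (Fin 2) ℝ) (hΦξ0 : Φξ 0 = 1)
    (hΦξ : ∀ t ≥ (0 : ℝ), ∀ i j, HasDerivAt (fun s => Φξ s i j)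
      ((Aξ t * Φξ t) i j) t) :
    ∀ t ≥ (0 : ℝ),
      z t - r t 1 = Φξ t 1 0 * θ + Ω t 1 0 * μ₁ + Ω t 1 1 * μ₂ :=
  gpebo_disturbance_lre_general θ μ₁ μ₂ ΔF YF ξF φ hYF hξF Aξ hAξ z hz0 hz r hr0 hr Ω hΩ0 hΩ Φξ hΦξ0
    hΦξ
end
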